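/- Let R > 0 a.s. be a random variable such that 1/R has regularly varying survival function with index −α for some α ∈ (0,1), and let ψ be the Williamson d-transform of R. Then x ↦ 1 − ψ(1/x) is regularly varying at infinity with index −α. -/

import Mathlib

/-!
By Fubini and `1 - (1 - u)₊^(n+1) = (n+1) ∫₀¹ 1{s < u} (1 - s)^n ds`, the quantity `1 - ψ(1/x)`
equals `(n+1) ∫₀¹ (1 - s)^n g(x s) ds`, where `g` is the survival function of `1/R` and
`d = n + 2`. As `g` is antitone and regularly varying with index `-α > -1`, a Potter-type bound
`g(x s) ≤ C s^(-β) g(x)` with `α < β < 1` allows dominated convergence: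
`∫₀¹ (1 - s)^n g(x s) ds / g(x) → ∫₀¹ (1 - s)^n s^(-α) ds > 0`. A function asymptotic to a
positive multiple of a regularly varying function is regularly varying with the same index.
-/

open MeasureTheory ProbabilityTheory Filter Set Topology

def IsRegularlyVarying (f : ℝ → ℝ) (ρ : ℝ) : Prop :=
  ∀ c > (0 : ℝ), Tendsto (fun x => f (c * x) / f x) atTop (𝓝 (c ^ ρ))

namespace IsRegularlyVarying

variable {f g : ℝ → ℝ} {ρ : ℝ}

theorem eventually_ne_zero (hf : IsRegularlyVarying f ρ) : ∀ᶠ x in atTop, f x ≠ 0 := by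
  have h := hf 1 one_pos
  simp only [one_mul, Real.one_rpow] at h
  filter_upwards [h.eventually_ne one_ne_zero] with x hx h0
  simp [h0] at hx

theorem pos_of_antitone (hf : IsRegularlyVarying f ρ) (hanti : Antitone f)
    (hnn : ∀ x, 0 ≤ f x) (x : ℝ) : 0 < f x := by
  obtain ⟨y, hy, hxy⟩ := (hf.eventually_ne_zero.and (eventually_ge_atTop x)).exists
  exact ((hnn y).lt_of_ne' hy).trans_le (hanti hxy)

theorem eventually_le_two_rpow_mul (hf : IsRegularlyVarying f ρ) (hpos : ∀ x, 0 < f x)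
    {β : ℝ} (hρ : -β < ρ) : ∀ᶠ x in atTop, f x ≤ 2 ^ β * f (2 * x) := by
  have h2 : (2 : ℝ) ^ (-β) < 2 ^ ρ := Real.rpow_lt_rpow_of_exponent_lt one_lt_two hρ
  filter_upwards [(hf 2 two_pos).eventually (eventually_gt_nhds h2)] with x hx
  rw [lt_div_iff₀ (hpos x), Real.rpow_neg zero_le_two, inv_mul_lt_iff₀ (by positivity)] at hx
  exact hx.le

theorem of_tendsto_div (hg : IsRegularlyVarying g ρ) {I : ℝ}
    (h : Tendsto (fun x => f x / g x) atTop (𝓝 I)) (hI : I ≠ 0) : IsRegularlyVarying f ρ := by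
  intro c hc
  have hcx : Tendsto (c * ·) atTop atTop := tendsto_id.const_mul_atTop hc
  have hlim := ((h.comp hcx).mul (hg c hc)).div h hI
  rw [mul_div_cancel_left₀ _ hI] at hlim
  refine hlim.congr' ?_
  filter_upwards [h.eventually_ne hI, hcx.eventually (h.eventually_ne hI)] with x hx hcx
  obtain ⟨hfx, hgx⟩ := div_ne_zero_iff.mp hx
  obtain ⟨hfcx, hgcx⟩ := div_ne_zero_iff.mp hcx
  simp only [Pi.div_apply, Function.comp_apply]
  field_simp

end IsRegularlyVarying

section Doubling

variable {g : ℝ → ℝ} {β M : ℝ}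

theorem le_rpow_mul_of_doubling (hanti : Antitone g) (hnn : ∀ y, 0 ≤ g y) (hβ : 0 ≤ β)
    (hK : ∀ y, M ≤ y → g y ≤ 2 ^ β * g (2 * y)) {y z : ℝ} (hMy : M ≤ y) (hy : 0 < y)
    (hyz : y ≤ z) : g y ≤ (2 * (z / y)) ^ β * g z := by
  obtain ⟨n, hn⟩ := pow_unbounded_of_one_lt (z / y) one_lt_two
  induction n generalizing y with
  | zero =>
    rw [pow_zero, div_lt_one hy] at hn
    exact absurd hyz hn.not_ge
  | succ n ih =>
    have hdouble : (2 * (z / y)) ^ β = 2 ^ β * (z / y) ^ β :=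
      Real.mul_rpow zero_le_two (div_nonneg (hy.le.trans hyz) hy.le)
    rcases le_or_gt z (2 * y) with hz | hz
    · have hzy : 1 ≤ (z / y) ^ β := Real.one_le_rpow ((one_le_div hy).mpr hyz) hβ
      calc g y ≤ 2 ^ β * g (2 * y) := hK y hMy
        _ ≤ 2 ^ β * g z := by gcongr; exact hanti hz
        _ ≤ 2 ^ β * ((z / y) ^ β * g z) := by gcongr; exact le_mul_of_one_le_left (hnn z) hzy
        _ = (2 * (z / y)) ^ β * g z := by rw [hdouble, mul_assoc]
    · have hn' : z / (2 * y) < 2 ^ n := by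
        rw [div_lt_iff₀ (by positivity)]
        rw [pow_succ, div_lt_iff₀ hy] at hn
        linarith
      calc g y ≤ 2 ^ β * g (2 * y) := hK y hMy
        _ ≤ 2 ^ β * ((2 * (z / (2 * y))) ^ β * g z) := by
          gcongr; exact ih (by linarith) (by positivity) hz.le hn'
        _ = (2 * (z / y)) ^ β * g z := by
          rw [show 2 * (z / (2 * y)) = z / y by field_simp, hdouble, mul_assoc]

/-- Potter-type bound. For `x * s < M` it only uses `g (x * s) ≤ g 0`. -/
theorem le_mul_rpow_neg_mul_of_doubling (hanti : Antitone g) (hpos : ∀ y, 0 < g y)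
    (hβ : 0 ≤ β) (hM : 0 < M) (hK : ∀ y, M ≤ y → g y ≤ 2 ^ β * g (2 * y)) {x s : ℝ}
    (hx : M ≤ x) (hs : 0 < s) (hs1 : s ≤ 1) :
    g (x * s) ≤ g 0 / g M * 2 ^ β * s ^ (-β) * g x := by
  have hx0 : 0 < x := hM.trans_le hx
  have hnn : ∀ y, 0 ≤ g y := fun y => (hpos y).le
  have hC : 1 ≤ g 0 / g M := (one_le_div (hpos M)).mpr (hanti hM.le)
  have hratio : (2 * (x / (x * s))) ^ β = 2 ^ β * s ^ (-β) := by
    rw [div_mul_cancel_left₀ hx0.ne', Real.mul_rpow zero_le_two (by positivity),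
      Real.inv_rpow hs.le, Real.rpow_neg hs.le]
  rcases le_or_gt M (x * s) with hxs | hxs
  · calc g (x * s) ≤ (2 * (x / (x * s))) ^ β * g x :=
          le_rpow_mul_of_doubling hanti hnn hβ hK hxs (by positivity)
            (mul_le_of_le_one_right hx0.le hs1)
      _ = 2 ^ β * s ^ (-β) * g x := by rw [hratio]
      _ ≤ g 0 / g M * 2 ^ β * s ^ (-β) * g x := by
        rw [mul_assoc (g 0 / g M), mul_assoc (g 0 / g M)]
        exact le_mul_of_one_le_left (mul_nonneg (by positivity) (hnn x)) hC
  · calc g (x * s) ≤ g 0 := hanti (mul_pos hx0 hs).le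
      _ = g 0 / g M * g M := (div_mul_cancel₀ _ (hpos M).ne').symm
      _ ≤ g 0 / g M * ((2 * (x / M)) ^ β * g x) := by
          gcongr; exact le_rpow_mul_of_doubling hanti hnn hβ hK le_rfl hM hx
      _ ≤ g 0 / g M * ((2 * (x / (x * s))) ^ β * g x) := by gcongr; exact hnn x
      _ = g 0 / g M * 2 ^ β * s ^ (-β) * g x := by rw [hratio]; ring

end Doubling

theorem IsRegularlyVarying.tendsto_setIntegral_mul_comp_mul_div {g w : ℝ → ℝ} {α C : ℝ}
    (hg : IsRegularlyVarying g (-α)) (hanti : Antitone g) (hpos : ∀ y, 0 < g y) (hα : α < 1)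
    (hw : Measurable w) (hwC : ∀ s ∈ Ioo (0 : ℝ) 1, |w s| ≤ C) :
    Tendsto (fun x => (∫ s in Ioo (0 : ℝ) 1, w s * g (x * s)) / g x) atTop
      (𝓝 (∫ s in Ioo (0 : ℝ) 1, w s * s ^ (-α))) := by
  obtain ⟨β, hαβ, hβ0, hβ1⟩ : ∃ β : ℝ, -β < -α ∧ 0 ≤ β ∧ -1 < -β :=
    ⟨(1 + max α 0) / 2, by linarith [le_max_left α 0], by positivity,
      by linarith [max_lt hα one_pos]⟩
  obtain ⟨M₀, hM₀⟩ := eventually_atTop.mp (hg.eventually_le_two_rpow_mul hpos hαβ)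
  set M := max M₀ 1
  have hK : ∀ y, M ≤ y → g y ≤ 2 ^ β * g (2 * y) := fun y hy => hM₀ y (le_of_max_le_left hy)
  have hM : 0 < M := lt_max_of_lt_right one_pos
  have hC : 0 ≤ C := (abs_nonneg _).trans (hwC (1 / 2) (by norm_num))
  have hbound_int : IntegrableOn (fun s => C * (g 0 / g M * 2 ^ β * s ^ (-β))) (Ioo 0 1) :=
    (((intervalIntegral.integrableOn_Ioo_rpow_iff one_pos).mpr hβ1).const_mul _).const_mul _
  simp_rw [← integral_div, mul_div_assoc]
  refine tendsto_integral_filter_of_dominated_convergence _ ?_ ?_ hbound_int ?_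
  · exact Eventually.of_forall fun x =>
      (hw.mul ((hanti.measurable.comp (measurable_const_mul x)).div_const _)).aestronglyMeasurable
  · filter_upwards [eventually_ge_atTop M] with x hx
    refine (ae_restrict_iff' measurableSet_Ioo).mpr (Eventually.of_forall fun s hs => ?_)
    rw [norm_mul, Real.norm_eq_abs, Real.norm_of_nonneg (div_nonneg (hpos _).le (hpos x).le)]
    gcongr
    · exact div_nonneg (hpos _).le (hpos x).le
    · exact hwC s hs
    · rw [div_le_iff₀ (hpos x)]
      exact le_mul_rpow_neg_mul_of_doubling hanti hpos hβ0 hM hK hx hs.1 hs.2.le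
  · refine (ae_restrict_iff' measurableSet_Ioo).mpr (Eventually.of_forall fun s hs => ?_)
    simpa only [mul_comm _ s] using (hg s hs.1).const_mul (w s)

theorem abs_one_sub_pow_le_one {s : ℝ} (hs : s ∈ Ioo (0 : ℝ) 1) (n : ℕ) : |(1 - s) ^ n| ≤ 1 := by
  rw [abs_pow]
  exact pow_le_one₀ (abs_nonneg _) (abs_le.mpr ⟨by linarith [hs.2], by linarith [hs.1]⟩)

theorem one_sub_max_one_sub_pow_eq_setIntegral (n : ℕ) {u : ℝ} (hu : 0 ≤ u) :
    1 - max (1 - u) 0 ^ (n + 1) =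
      ∫ s in Ioo (0 : ℝ) 1, (Iio u).indicator (fun s => (n + 1 : ℝ) * (1 - s) ^ n) s := by
  have hm : 0 ≤ min 1 u := le_min zero_le_one hu
  have hset : Ioo (0 : ℝ) 1 ∩ Iio u = Ioo 0 (min 1 u) := by
    ext s; simp [and_assoc]
  rw [setIntegral_indicator measurableSet_Iio, hset, ← integral_Ioc_eq_integral_Ioo,
    ← intervalIntegral.integral_of_le hm,
    intervalIntegral.integral_comp_sub_left (fun t => (n + 1 : ℝ) * t ^ n),
    intervalIntegral.integral_const_mul, integral_pow, sub_zero, one_pow,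
    ← max_sub_sub_left, sub_self]
  field_simp
  rw [max_comm]

theorem integrable_indicator_mul_one_sub_pow {Ω : Type*} [MeasurableSpace Ω] (μ : Measure Ω)
    [IsFiniteMeasure μ] {E : Set (Ω × ℝ)} (hE : MeasurableSet E) (c : ℝ) (n : ℕ) :
    Integrable (E.indicator fun p => c * (1 - p.2) ^ n)
      (μ.prod (volume.restrict (Ioo (0 : ℝ) 1))) := by
  have : IsFiniteMeasure (volume.restrict (Ioo (0 : ℝ) 1)) :=
    isFiniteMeasure_restrict.mpr measure_Ioo_lt_top.ne
  refine .of_bound ((by fun_prop : Measurable _).indicator hE).aestronglyMeasurable |c| ?_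
  rw [← Measure.restrict_univ (μ := μ), Measure.prod_restrict]
  refine ae_restrict_of_forall_mem (MeasurableSet.univ.prod measurableSet_Ioo) ?_
  rintro ⟨ω, s⟩ ⟨-, hs⟩
  calc ‖E.indicator (fun p => c * (1 - p.2) ^ n) (ω, s)‖ ≤ ‖c * (1 - s) ^ n‖ :=
        norm_indicator_le_norm_self _ _
    _ ≤ |c| := by
        rw [norm_mul, Real.norm_eq_abs, Real.norm_eq_abs]
        exact mul_le_of_le_one_right (abs_nonneg c) (abs_one_sub_pow_le_one hs n)

theorem one_sub_integral_max_one_sub_div_pow {Ω : Type*} [MeasurableSpace Ω] (μ : Measure Ω)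
    [IsProbabilityMeasure μ] {R : Ω → ℝ} (hRm : Measurable R) (hR : ∀ᵐ ω ∂μ, 0 < R ω) (n : ℕ)
    {x : ℝ} (hx : 0 < x) :
    1 - ∫ ω, max (1 - 1 / x / R ω) 0 ^ (n + 1) ∂μ =
      (n + 1) * ∫ s in Ioo (0 : ℝ) 1, (1 - s) ^ n * μ.real {ω | x * s < 1 / R ω} := by
  set ν := volume.restrict (Ioo (0 : ℝ) 1)
  set E : Set (Ω × ℝ) := {p | x * p.2 < 1 / R p.1}
  set F : Ω × ℝ → ℝ := E.indicator fun p => (n + 1 : ℝ) * (1 - p.2) ^ n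
  have hE : MeasurableSet E :=
    measurableSet_lt (measurable_snd.const_mul x) (measurable_const.div (hRm.comp measurable_fst))
  have hF : Integrable F (μ.prod ν) := integrable_indicator_mul_one_sub_pow μ hE _ n
  have hpow_int : Integrable (fun ω => max (1 - 1 / x / R ω) 0 ^ (n + 1)) μ := by
    refine .of_bound (by fun_prop : Measurable _).aestronglyMeasurable 1 ?_
    filter_upwards [hR] with ω hω
    have h0 : 0 ≤ 1 / x / R ω := by positivity
    rw [norm_pow, Real.norm_of_nonneg (le_max_right _ _)]
    exact pow_le_one₀ (le_max_right _ _) (max_le (by linarith) zero_le_one)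
  have hfiber : ∀ᵐ ω ∂μ, 1 - max (1 - 1 / x / R ω) 0 ^ (n + 1) = ∫ s, F (ω, s) ∂ν := by
    filter_upwards [hR] with ω hω
    rw [one_sub_max_one_sub_pow_eq_setIntegral n (by positivity)]
    congr 1 with s
    simp only [F, E, indicator_apply, mem_Iio, mem_ofPred_eq]
    have hiff : s < 1 / x / R ω ↔ x * s < 1 / R ω := by
      rw [div_div, lt_div_iff₀ (by positivity), lt_div_iff₀ hω, mul_comm x s, mul_assoc]
    simp only [hiff]
  have hsection (s : ℝ) :
      ∫ ω, F (ω, s) ∂μ = (n + 1) * ((1 - s) ^ n * μ.real {ω | x * s < 1 / R ω}) := by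
    have hS : MeasurableSet {ω | x * s < 1 / R ω} :=
      measurableSet_lt measurable_const (measurable_const.div hRm)
    change ∫ ω, {ω | x * s < 1 / R ω}.indicator (fun _ => (n + 1 : ℝ) * (1 - s) ^ n) ω ∂μ = _
    rw [integral_indicator_const _ hS, smul_eq_mul]
    ring
  calc 1 - ∫ ω, max (1 - 1 / x / R ω) 0 ^ (n + 1) ∂μ
      = ∫ ω, (1 - max (1 - 1 / x / R ω) 0 ^ (n + 1)) ∂μ := by
        rw [integral_sub (integrable_const 1) hpow_int, integral_const, probReal_univ, one_smul]
    _ = ∫ ω, ∫ s, F (ω, s) ∂ν ∂μ := integral_congr_ae hfiber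
    _ = ∫ s, ∫ ω, F (ω, s) ∂μ ∂ν := integral_integral_swap hF
    _ = _ := by simp_rw [hsection]; exact integral_const_mul _ _

theorem setIntegral_one_sub_pow_mul_rpow_pos (n : ℕ) {a : ℝ} (ha : -1 < a) :
    0 < ∫ s in Ioo (0 : ℝ) 1, (1 - s) ^ n * s ^ a := by
  have hpos : ∀ s ∈ Ioo (0 : ℝ) 1, 0 < (1 - s) ^ n * s ^ a := fun s hs =>
    mul_pos (pow_pos (by linarith [hs.2]) n) (Real.rpow_pos_of_pos hs.1 a)
  have hint : IntegrableOn (fun s : ℝ => (1 - s) ^ n * s ^ a) (Ioo 0 1) := by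
    refine ((intervalIntegral.integrableOn_Ioo_rpow_iff one_pos).mpr ha).mono'
      (by fun_prop : Measurable _).aestronglyMeasurable ?_
    refine (ae_restrict_iff' measurableSet_Ioo).mpr (Eventually.of_forall fun s hs => ?_)
    rw [norm_mul, Real.norm_eq_abs, Real.norm_of_nonneg (Real.rpow_pos_of_pos hs.1 a).le]
    exact mul_le_of_le_one_left (Real.rpow_pos_of_pos hs.1 a).le (abs_one_sub_pow_le_one hs n)
  have hsupp : Ioo (0 : ℝ) 1 ⊆ Function.support fun s : ℝ => (1 - s) ^ n * s ^ a :=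
    fun s hs => (hpos s hs).ne'
  have hnn : 0 ≤ᵐ[volume.restrict (Ioo 0 1)] fun s : ℝ => (1 - s) ^ n * s ^ a :=
    (ae_restrict_iff' measurableSet_Ioo).mpr (Eventually.of_forall fun s hs => (hpos s hs).le)
  rw [setIntegral_pos_iff_support_of_nonneg_ae hnn hint, inter_eq_self_of_subset_right hsupp,
    Real.volume_Ioo]
  norm_num

theorem williamson_transform_regvar_at_origin
    {Ω : Type*} [MeasureSpace Ω] [IsProbabilityMeasure (ℙ : Measure Ω)]
    (d : ℕ) (hd : 2 ≤ d)
    (R : Ω → ℝ) (hRm : Measurable R) (hR : ∀ᵐ ω ∂ℙ, 0 < R ω)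
    (α : ℝ) (hα : α ∈ Set.Ioo (0:ℝ) 1)
    -- the survival function of 1/R is regularly varying with index -α
    (hRV : ∀ c > (0:ℝ), Tendsto
      (fun x => (ℙ {ω | c * x < 1 / R ω}).toReal / (ℙ {ω | x < 1 / R ω}).toReal)
      atTop (nhds (c ^ (-α))))
    (ψ : ℝ → ℝ)
    (hψ : ∀ x : ℝ, ψ x = ∫ ω, (max (1 - x / R ω) 0) ^ (d - 1) ∂ℙ) :
    ∀ c > (0:ℝ), Tendsto
      (fun x => (1 - ψ (1 / (c * x))) / (1 - ψ (1 / x)))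
      atTop (nhds (c ^ (-α))) := by
  obtain ⟨n, rfl⟩ : ∃ n, d = n + 2 := ⟨d - 2, by omega⟩
  set g : ℝ → ℝ := fun y => Measure.real ℙ {ω | y < 1 / R ω}
  have hg : IsRegularlyVarying g (-α) := hRV
  have hanti : Antitone g := fun a b hab => measureReal_mono fun ω h => hab.trans_lt h
  have hpos := hg.pos_of_antitone hanti fun y => measureReal_nonneg
  have hW := hg.tendsto_setIntegral_mul_comp_mul_div hanti hpos hα.2 (w := fun s => (1 - s) ^ n)
    (by fun_prop) fun s hs => abs_one_sub_pow_le_one hs n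
  have hW_rv :=
    hg.of_tendsto_div hW (setIntegral_one_sub_pow_mul_rpow_pos n (by linarith [hα.2])).ne'
  intro c hc
  refine (hW_rv c hc).congr' ?_
  filter_upwards [eventually_gt_atTop 0] with x hx
  simp only [hψ, show n + 2 - 1 = n + 1 from rfl,
    one_sub_integral_max_one_sub_div_pow ℙ hRm hR n hx,
    one_sub_integral_max_one_sub_div_pow ℙ hRm hR n (mul_pos hc hx)]
  exact (mul_div_mul_left _ _ (by positivity)).symm
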